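/- Node count of the position heap: let T be a string of length n over the alphabet A. Then the set of nonempty strings represented in T is finite, and its cardinality equals n minus the number of secondary positions of T. (Each primary position contributes exactly one new represented string, so the position heap of T has n + 1 nodes minus the number of double nodes.) -/

import Mathlib

/-- `w` occurs in `T` at the (1-indexed) position `p`, i.e. `1 ≤ p ≤ |T| - |w| + 1`
and `T[p..p+|w|-1] = w`. -/
def OccursAt {A : Type*} (T w : List A) (p : ℕ) : Prop :=
  1 ≤ p ∧ p + w.length ≤ T.length + 1 ∧ (T.drop (p - 1)).take w.length = w

/-- `w` is represented in `T`: there are positions `p 1 < p 2 < ... < p |w|` such that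
for each `1 ≤ ℓ ≤ |w|`, the prefix `w[1..ℓ]` occurs in `T` at position `p ℓ`. -/
def Represented {A : Type*} (T w : List A) : Prop :=
  ∃ p : ℕ → ℕ,
    (∀ i j, 1 ≤ i → i < j → j ≤ w.length → p i < p j) ∧
    (∀ ℓ, 1 ≤ ℓ → ℓ ≤ w.length → OccursAt T (w.take ℓ) (p ℓ))

/-- A position `j` with `1 ≤ j ≤ |T|` is secondary if there are positions
`p 1 < p 2 < ... < p (|T| - j + 1)`, all strictly less than `j`, such that for each
`1 ≤ ℓ ≤ |T| - j + 1`, the prefix `T[j..j+ℓ-1]` of the suffix `T[j..|T|]`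
occurs in `T` at position `p ℓ`. -/
def Secondary {A : Type*} (T : List A) (j : ℕ) : Prop :=
  1 ≤ j ∧ j ≤ T.length ∧
  ∃ p : ℕ → ℕ,
    (∀ i i', 1 ≤ i → i < i' → i' ≤ T.length - j + 1 → p i < p i') ∧
    (∀ ℓ, 1 ≤ ℓ → ℓ ≤ T.length - j + 1 →
      p ℓ < j ∧ OccursAt T ((T.drop (j - 1)).take ℓ) (p ℓ))

/-!
Let `heapNodes T j` be the nonempty strings represented in `T` using only positions `≤ j`.
Passing from `j` to `j + 1` can only add strings `w` that are prefixes of the suffix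
`S = T[j+1..]` such that `w` is new but `w.dropLast` is already present. The old set is
prefix-closed, so there is no such `w` when `S` itself is already represented, which is exactly
the case of a secondary position `j + 1`, and otherwise there is exactly one: the shortest prefix
of `S` not yet represented. Hence every primary position adds one node and every secondary
position none.
-/

namespace List

variable {α : Type*} {P : List α → Prop}

theorem IsPrefix.prefix_dropLast {u v : List α} (h : u <+: v) (hne : u ≠ v) :
    u <+: v.dropLast := by
  have hv : v ≠ [] := by rintro rfl; exact hne (prefix_nil.mp h)
  rw [← dropLast_append_getLast hv, prefix_concat_iff, dropLast_append_getLast hv] at h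
  exact h.resolve_left hne

theorem setOf_prefix_not_and_dropLast_eq_empty (hP : ∀ ⦃u v⦄, u <+: v → P v → P u)
    {S : List α} (hS : P S) : {w | w <+: S ∧ ¬ P w ∧ P w.dropLast} = ∅ :=
  Set.eq_empty_of_forall_notMem fun _ ⟨hw, hPw, _⟩ => hPw (hP hw hS)

theorem exists_prefix_not_and_dropLast (hnil : P []) {S : List α} (hS : ¬ P S) :
    ∃ w, w <+: S ∧ ¬ P w ∧ P w.dropLast := by
  induction S using reverseRecOn with
  | nil => exact absurd hnil hS
  | append_singleton S a ih =>
    by_cases hP : P S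
    · exact ⟨S ++ [a], prefix_rfl, hS, by rwa [dropLast_concat]⟩
    · obtain ⟨w, hw, hw'⟩ := ih hP
      exact ⟨w, hw.trans (prefix_append S [a]), hw'⟩

theorem ncard_setOf_prefix_not_and_dropLast (hP : ∀ ⦃u v⦄, u <+: v → P v → P u)
    (hnil : P []) {S : List α} (hS : ¬ P S) :
    {w | w <+: S ∧ ¬ P w ∧ P w.dropLast}.ncard = 1 := by
  obtain ⟨w, hw⟩ := exists_prefix_not_and_dropLast hnil hS
  refine Set.ncard_eq_one.mpr ⟨w, Set.eq_singleton_iff_unique_mem.mpr ⟨hw, ?_⟩⟩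
  rintro v ⟨hv, hPv, hPv'⟩
  by_contra hne
  rcases prefix_or_prefix_of_prefix hv hw.1 with h | h
  · exact hPv (hP (h.prefix_dropLast hne) hw.2.2)
  · exact hw.2.1 (hP (h.prefix_dropLast (Ne.symm hne)) hPv')

end List

section PositionHeap

variable {A : Type*}

theorem occursAt_succ_iff {T w : List A} (hw : w ≠ []) {j : ℕ} :
    OccursAt T w (j + 1) ↔ w <+: T.drop j := by
  simp only [OccursAt, add_tsub_cancel_right, le_add_iff_nonneg_left, zero_le, true_and]
  refine ⟨fun h => List.prefix_iff_eq_take.mpr h.2.symm,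
    fun h => ⟨?_, (List.prefix_iff_eq_take.mp h).symm⟩⟩
  have := h.length_le
  have := List.length_pos_iff.mpr hw
  simp only [List.length_drop] at *
  omega

theorem OccursAt.sublist {T w : List A} {p : ℕ} (h : OccursAt T w p) : w.Sublist T := by
  rw [← h.2.2]
  exact ((List.take_prefix _ _).isInfix.trans (List.drop_suffix _ _).isInfix).sublist

def RepresentedUpTo (T : List A) (j : ℕ) (w : List A) : Prop :=
  ∃ p : ℕ → ℕ,
    (∀ i i', 1 ≤ i → i < i' → i' ≤ w.length → p i < p i') ∧
    (∀ ℓ, 1 ≤ ℓ → ℓ ≤ w.length → p ℓ ≤ j ∧ OccursAt T (w.take ℓ) (p ℓ))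

section RepresentedUpTo

variable {T w : List A} {j : ℕ}

theorem representedUpTo_nil (T : List A) (j : ℕ) : RepresentedUpTo T j [] :=
  ⟨id, fun _ _ _ _ h => by simp at h; omega, fun _ _ h => by simp at h; omega⟩

theorem RepresentedUpTo.of_prefix {u : List A} (hw : RepresentedUpTo T j w) (hu : u <+: w) :
    RepresentedUpTo T j u := by
  obtain ⟨p, hp, hocc⟩ := hw
  refine ⟨p, fun i i' h1 h2 h3 => hp i i' h1 h2 (h3.trans hu.length_le), fun ℓ h1 h2 => ?_⟩
  rw [List.prefix_iff_eq_take.mp hu, List.take_take, min_eq_left h2]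
  exact hocc ℓ h1 (h2.trans hu.length_le)

theorem RepresentedUpTo.sublist (hw : RepresentedUpTo T j w) : w.Sublist T := by
  obtain ⟨p, -, hocc⟩ := hw
  rcases eq_or_ne w [] with rfl | hne
  · exact List.nil_sublist T
  · simpa using (hocc w.length (List.length_pos_iff.mpr hne) le_rfl).2.sublist

theorem representedUpTo_iff (hw : w ≠ []) :
    RepresentedUpTo T j w ↔
      ∃ q ≤ j, OccursAt T w q ∧ RepresentedUpTo T (q - 1) w.dropLast := by
  have hn : 1 ≤ w.length := List.length_pos_iff.mpr hw
  have htake : ∀ ℓ ≤ w.length - 1, w.dropLast.take ℓ = w.take ℓ := fun ℓ hℓ => by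
    rw [List.dropLast_eq_take, List.take_take, min_eq_left hℓ]
  simp only [RepresentedUpTo, List.length_dropLast]
  constructor
  · rintro ⟨p, hp, hocc⟩
    obtain ⟨hq, hoccq⟩ := hocc w.length hn le_rfl
    refine ⟨p w.length, hq, by rwa [List.take_length] at hoccq, p,
      fun i i' h1 h2 h3 => hp i i' h1 h2 (by omega), fun ℓ h1 h2 => ?_⟩
    have := hp ℓ w.length h1 (by omega) le_rfl
    exact ⟨by omega, htake ℓ h2 ▸ (hocc ℓ h1 (by omega)).2⟩
  · rintro ⟨q, hq, hoccq, p, hp, hocc⟩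
    refine ⟨Function.update p w.length q, fun i i' h1 h2 h3 => ?_, fun ℓ h1 h2 => ?_⟩
    · rw [Function.update_of_ne (by omega)]
      rcases h3.lt_or_eq with h3 | rfl
      · rw [Function.update_of_ne (by omega)]
        exact hp i i' h1 h2 (by omega)
      · have := (hocc i h1 (by omega)).1
        have := hoccq.1
        rw [Function.update_self]
        omega
    · rcases h2.lt_or_eq with h2 | rfl
      · rw [Function.update_of_ne (by omega), ← htake ℓ (by omega)]
        exact ⟨by have := (hocc ℓ h1 (by omega)).1; omega, (hocc ℓ h1 (by omega)).2⟩
      · rw [Function.update_self, List.take_length]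
        exact ⟨hq, hoccq⟩

theorem representedUpTo_succ_iff :
    RepresentedUpTo T (j + 1) w ↔
      RepresentedUpTo T j w ∨ (w <+: T.drop j ∧ RepresentedUpTo T j w.dropLast) := by
  rcases eq_or_ne w [] with rfl | hw
  · simp [representedUpTo_nil]
  simp only [representedUpTo_iff hw, Nat.le_succ_iff]
  constructor
  · rintro ⟨q, hq | rfl, hocc, hrep⟩
    · exact .inl ⟨q, hq, hocc, hrep⟩
    · exact .inr ⟨(occursAt_succ_iff hw).mp hocc, hrep⟩
  · rintro (⟨q, hq, hocc, hrep⟩ | ⟨hpre, hrep⟩)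
    · exact ⟨q, .inl hq, hocc, hrep⟩
    · exact ⟨j + 1, .inr rfl, (occursAt_succ_iff hw).mpr hpre, hrep⟩

end RepresentedUpTo

theorem representedUpTo_length_iff {T w : List A} :
    RepresentedUpTo T T.length w ↔ Represented T w := by
  refine ⟨fun ⟨p, hp, hocc⟩ => ⟨p, hp, fun ℓ h1 h2 => (hocc ℓ h1 h2).2⟩,
    fun ⟨p, hp, hocc⟩ => ⟨p, hp, fun ℓ h1 h2 => ⟨?_, hocc ℓ h1 h2⟩⟩⟩
  have := (hocc ℓ h1 h2).2.1
  rw [List.length_take, min_eq_left h2] at this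
  omega

theorem secondary_succ_iff {T : List A} {j : ℕ} :
    Secondary T (j + 1) ↔ j + 1 ≤ T.length ∧ RepresentedUpTo T j (T.drop j) := by
  simp only [Secondary, RepresentedUpTo, add_tsub_cancel_right, List.length_drop,
    Nat.lt_succ_iff, le_add_iff_nonneg_left, zero_le, true_and, and_congr_right_iff]
  intro hj
  rw [show T.length - (j + 1) + 1 = T.length - j by omega]

/-- The nonempty nodes of the position heap built from the positions `1, …, j` of `T`. -/
def heapNodes (T : List A) (j : ℕ) : Set (List A) := {w | w ≠ [] ∧ RepresentedUpTo T j w}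

section heapNodes

variable {T : List A} {j : ℕ}

theorem heapNodes_zero (T : List A) : heapNodes T 0 = ∅ :=
  Set.eq_empty_of_forall_notMem fun w ⟨hw, p, _, hocc⟩ => by
    have := hocc 1 le_rfl (List.length_pos_iff.mpr hw)
    have := this.2.1
    omega

theorem finite_heapNodes (T : List A) (j : ℕ) : (heapNodes T j).Finite :=
  T.sublists.finite_toSet.subset fun _ hw => List.mem_sublists.mpr hw.2.sublist

theorem heapNodes_succ : heapNodes T (j + 1) = heapNodes T j ∪
    {w | w <+: T.drop j ∧ ¬ RepresentedUpTo T j w ∧ RepresentedUpTo T j w.dropLast} := by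
  ext w
  rcases eq_or_ne w [] with rfl | hw
  · simp [heapNodes, representedUpTo_nil]
  · simp only [heapNodes, Set.mem_union, Set.mem_ofPred_eq, representedUpTo_succ_iff]
    tauto

theorem ncard_heapNodes_succ [Decidable (Secondary T (j + 1))] (hj : j + 1 ≤ T.length) :
    (heapNodes T (j + 1)).ncard =
      (heapNodes T j).ncard + if Secondary T (j + 1) then 0 else 1 := by
  have hclosed : ∀ ⦃u v⦄, u <+: v → RepresentedUpTo T j v → RepresentedUpTo T j u :=
    fun _ _ huv hv => hv.of_prefix huv
  rw [heapNodes_succ, Set.ncard_union_eq (Set.disjoint_left.mpr fun _ hw hw' => hw'.2.1 hw.2)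
    (finite_heapNodes T j)
    ((T.drop j).inits.finite_toSet.subset fun _ hw => (List.mem_inits _ _).mpr hw.1)]
  split_ifs with hs
  · rw [List.setOf_prefix_not_and_dropLast_eq_empty hclosed (secondary_succ_iff.mp hs).2,
      Set.ncard_empty]
  · rw [List.ncard_setOf_prefix_not_and_dropLast hclosed (representedUpTo_nil T j)
      fun h => hs (secondary_succ_iff.mpr ⟨hj, h⟩)]

theorem ncard_heapNodes_add_count [DecidablePred (Secondary T)] (hj : j ≤ T.length) :
    (heapNodes T j).ncard + Nat.count (Secondary T) (j + 1) = j := by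
  induction j with
  | zero => simp [heapNodes_zero, Nat.count_succ, Secondary]
  | succ j ih =>
    have := ih (by omega)
    rw [ncard_heapNodes_succ hj, Nat.count_succ]
    split_ifs <;> omega

end heapNodes

theorem ncard_setOf_secondary (T : List A) [DecidablePred (Secondary T)] :
    {j | Secondary T j}.ncard = Nat.count (Secondary T) (T.length + 1) := by
  rw [Nat.count_eq_card_filter_range, ← Set.ncard_coe_finset]
  congr 1
  ext j
  simp only [Set.mem_ofPred_eq, Finset.coe_filter, Finset.mem_range, Nat.lt_succ_iff]
  exact ⟨fun h => ⟨h.2.1, h⟩, And.right⟩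

end PositionHeap

/-- Node count of the position heap: the set of nonempty strings represented in `T`
is finite, and its cardinality equals `|T|` minus the number of secondary positions
of `T`. -/
theorem represented_count {A : Type*} (T : List A) :
    {w : List A | w ≠ [] ∧ Represented T w}.Finite ∧
    {w : List A | w ≠ [] ∧ Represented T w}.ncard
      = T.length - {j : ℕ | Secondary T j}.ncard := by
  classical
  have hnodes : heapNodes T T.length = {w | w ≠ [] ∧ Represented T w} := by
    simp only [heapNodes, representedUpTo_length_iff]
  have hcount := ncard_heapNodes_add_count (T := T) le_rfl
  rw [hnodes, ← ncard_setOf_secondary] at hcount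
  exact ⟨hnodes ▸ finite_heapNodes T T.length, by omega⟩
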